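/- If two states s1 and s2 of a complete observable FSM S with n states are adaptively homing, then there exists a homing test case for {s1,s2} with at most n(n−1)/2 + 1 states and at most (n(n−1)/2)·|O| transitions. -/

import Mathlib

/-- A (non-initialized) finite state machine with transition relation `h ⊆ S × I × O × S`. -/
structure FSM (S I O : Type) where
  h : S → I → O → S → Prop

namespace FSM

variable {S I O Q : Type}

/-- `M` is complete: every input is defined at every state. -/
def Complete (M : FSM S I O) : Prop := ∀ s i, ∃ o s', M.h s i o s'

/-- `M` is observable: the `io`-successor of a state is unique when it exists. -/
def Observable (M : FSM S I O) : Prop :=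
  ∀ s i o t₁ t₂, M.h s i o t₁ → M.h s i o t₂ → t₁ = t₂

/-- `M.Runs s γ t` : `t` is reached from `s` along the trace `γ` (a list of input/output pairs). -/
inductive Runs (M : FSM S I O) : S → List (I × O) → S → Prop
  | nil (s : S) : Runs M s [] s
  | cons {s : S} {i : I} {o : O} {s' : S} {γ : List (I × O)} {t : S} :
      M.h s i o s' → Runs M s' γ t → Runs M s ((i, o) :: γ) t

/-- A deadlock state has no outgoing transitions. -/
def Deadlock (M : FSM S I O) (q : S) : Prop := ∀ i o q', ¬ M.h q i o q'

/-- A test case: initially connected, single-input, output-complete, observable,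
acyclic initialized FSM. -/
structure IsTestCase (P : FSM Q I O) (q0 : Q) : Prop where
  singleInput : ∀ q i₁ o₁ q₁ i₂ o₂ q₂, P.h q i₁ o₁ q₁ → P.h q i₂ o₂ q₂ → i₁ = i₂
  outputComplete : ∀ q i o q', P.h q i o q' → ∀ o', ∃ q'', P.h q i o' q''
  observable : P.Observable
  acyclic : ∀ q γ, γ ≠ ([] : List (I × O)) → ¬ P.Runs q γ q
  connected : ∀ q, ∃ γ, P.Runs q0 γ q

/-- `P` (with initial state `q0`) is a homing test case for the set `S'` of states of `M`:
for every trace from `q0` to a deadlock state, the successors of all states of `S'`,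
where they exist, coincide in a single state. -/
def IsHomingFor (M : FSM S I O) (S' : Set S) (P : FSM Q I O) (q0 : Q) : Prop :=
  ∀ γ q, P.Runs q0 γ q → P.Deadlock q →
    ∃ s : S, ∀ s' ∈ S', ∀ t, M.Runs s' γ t → t = s

/-- The set `S'` of states of `M` is adaptively homing: some (finite) homing test case exists. -/
def AdaptivelyHomingSet (M : FSM S I O) (S' : Set S) : Prop :=
  ∃ (Q : Type) (_ : Fintype Q) (P : FSM Q I O) (q0 : Q),
    P.IsTestCase q0 ∧ IsHomingFor M S' P q0

/-- The pair `(s₁, s₂)` is adaptively homing. -/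
def AdaptivelyHomingPair (M : FSM S I O) (s₁ s₂ : S) : Prop :=
  AdaptivelyHomingSet M {s₁, s₂}

/-- The intersection FSM `S/s₁ ∩ S/s₂`: states are pairs of states of `M`, and there is a
transition iff both components have the corresponding transition and the successors differ. -/
def inter (M : FSM S I O) : FSM (S × S) I O :=
  ⟨fun p i o p' => M.h p.1 i o p'.1 ∧ M.h p.2 i o p'.2 ∧ p'.1 ≠ p'.2⟩

/-- A set `A` of states is input-closed in `M`: from every state of `A` every input has at
least one transition leading back into `A`. -/
def InputClosed (M : FSM S I O) (A : Set S) : Prop :=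
  ∀ q ∈ A, ∀ i, ∃ o q', M.h q i o q' ∧ q' ∈ A

/-- The intersection `S/s₁ ∩ S/s₂` contains a complete submachine: a set of (distinct-component)
pairs containing the initial state `(s₁, s₂)` and input-closed in the intersection FSM. -/
def HasCompleteSubmachine (M : FSM S I O) (s₁ s₂ : S) : Prop :=
  ∃ A : Set (S × S), (s₁, s₂) ∈ A ∧ (∀ p ∈ A, p.1 ≠ p.2) ∧ InputClosed M.inter A

/-- One round of the iterative deletion process: keep the states of `A` at which every input
has a transition into `A`. -/
def step (M : FSM S I O) (A : Set S) : Set S :=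
  {q ∈ A | ∀ i, ∃ o q', M.h q i o q' ∧ q' ∈ A}

/-- Survivors of the deletion process after `n` rounds, starting from all states. -/
def surv (M : FSM S I O) : ℕ → Set S
  | 0 => Set.univ
  | n + 1 => step M (surv M n)

/-- Survivors of the deletion process on the intersection FSM after `n` rounds, starting
from all states of the intersection (pairs of distinct states). -/
def interSurv (M : FSM S I O) : ℕ → Set (S × S)
  | 0 => {p | p.1 ≠ p.2}
  | n + 1 => step M.inter (interSurv M n)

/-- The greatest input-closed subset of states of the intersection FSM: the union of all
input-closed sets of distinct-component pairs. -/
def greatestInterClosed (M : FSM S I O) : Set (S × S) :=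
  ⋃₀ {A : Set (S × S) | (∀ p ∈ A, p.1 ≠ p.2) ∧ InputClosed M.inter A}

end FSM


/-! Work with the FSM on unordered pairs of states of `M`, which moves both components along
the same input/output pair; a pair is merged when it reaches the diagonal. If the pair
`s(s₁, s₂)` lay in an input-closed set of off-diagonal pairs, every test case would have a trace
to a deadlock along which the pair stays unmerged, so it is not homing. By finiteness, the pairs
outside the attractor of the diagonal form such a set; hence `s(s₁, s₂)` lies in the attractor.
Applying, at every off-diagonal pair of the attractor, an input that lowers its attractor rank
gives an acyclic test case whose states are those pairs plus one sink, at most `n(n-1)/2 + 1`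
states with at most `|O|` transitions each. By observability the state reached along a trace is
the pair of the two successors, so reaching the sink means they have merged or one is missing.
-/

namespace FSM

variable {S I O Q X : Type}

abbrev Transitions (P : FSM Q I O) : Type :=
  {t : Q × I × O × Q // P.h t.1 t.2.1 t.2.2.1 t.2.2.2}

section Runs

variable {M : FSM S I O} {s t : S} {γ : List (I × O)}

theorem runs_nil_iff : M.Runs s [] t ↔ t = s :=
  ⟨fun h => by cases h; rfl, fun h => by subst h; exact .nil _⟩

theorem runs_cons_iff {i : I} {o : O} :
    M.Runs s ((i, o) :: γ) t ↔ ∃ s', M.h s i o s' ∧ M.Runs s' γ t :=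
  ⟨fun h => by cases h with | cons h₁ h₂ => exact ⟨_, h₁, h₂⟩, fun ⟨_, h₁, h₂⟩ => .cons h₁ h₂⟩

theorem Runs.snoc {i : I} {o : O} {t' : S} (hr : M.Runs s γ t) (ht : M.h t i o t') :
    M.Runs s (γ ++ [(i, o)]) t' := by
  induction hr with
  | nil => exact .cons ht (.nil _)
  | cons h₁ _ ih => exact .cons h₁ (ih ht)

theorem Runs.eq_of_observable (ho : M.Observable) {t' : S} (h : M.Runs s γ t)
    (h' : M.Runs s γ t') : t = t' := by
  induction h with
  | nil => exact (runs_nil_iff.1 h').symm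
  | cons ha _ ih =>
    obtain ⟨_, hb, h'⟩ := runs_cons_iff.1 h'
    exact ih (ho _ _ _ _ _ hb ha ▸ h')

theorem Runs.add_length_le (f : S → ℕ) (hf : ∀ s i o s', M.h s i o s' → f s' < f s)
    (h : M.Runs s γ t) : f t + γ.length ≤ f s := by
  induction h with
  | nil => simp
  | cons h₁ _ ih =>
    have := hf _ _ _ _ h₁
    simp only [List.length_cons]
    omega

theorem not_runs_self_of_rank (f : S → ℕ) (hf : ∀ s i o s', M.h s i o s' → f s' < f s)
    (hγ : γ ≠ []) : ¬ M.Runs s γ s := fun h => by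
  have := h.add_length_le f hf
  have := List.length_pos_iff.2 hγ
  omega

theorem exists_runs_of_transGen {a b : S}
    (h : Relation.TransGen (fun s s' => ∃ i o, M.h s i o s') a b) :
    ∃ γ ≠ [], M.Runs a γ b := by
  induction h using Relation.TransGen.head_induction_on with
  | single h => obtain ⟨i, o, h⟩ := h; exact ⟨[(i, o)], by simp, .cons h (.nil _)⟩
  | head h _ ih =>
    obtain ⟨i, o, h⟩ := h
    obtain ⟨γ, -, hγ⟩ := ih
    exact ⟨(i, o) :: γ, by simp, .cons h hγ⟩

theorem exists_forall_runs_eq (ho : M.Observable) {s₁ s₂ : S}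
    (h : ∀ t₁ t₂, M.Runs s₁ γ t₁ → M.Runs s₂ γ t₂ → t₁ = t₂) :
    ∃ s, ∀ s' ∈ ({s₁, s₂} : Set S), ∀ t, M.Runs s' γ t → t = s := by
  by_cases h₂ : ∃ t₂, M.Runs s₂ γ t₂
  · obtain ⟨t₂, ht₂⟩ := h₂
    refine ⟨t₂, ?_⟩
    rintro s' (rfl | rfl) t ht
    · exact h t t₂ ht ht₂
    · exact ht.eq_of_observable ho ht₂
  by_cases h₁ : ∃ t₁, M.Runs s₁ γ t₁
  · obtain ⟨t₁, ht₁⟩ := h₁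
    refine ⟨t₁, ?_⟩
    rintro s' (rfl | rfl) t ht
    · exact ht.eq_of_observable ho ht₁
    · exact absurd ⟨t, ht⟩ h₂
  · refine ⟨s₁, ?_⟩
    rintro s' (rfl | rfl) t ht
    exacts [absurd ⟨t, ht⟩ h₁, absurd ⟨t, ht⟩ h₂]

end Runs

theorem IsTestCase.wellFounded [Finite Q] {P : FSM Q I O} {q₀ : Q} (hP : P.IsTestCase q₀) :
    WellFounded fun q' q => ∃ i o, P.h q i o q' := by
  let r := Relation.TransGen fun q' q => ∃ i o, P.h q i o q'
  have : IsTrans Q r := ⟨fun _ _ _ => Relation.TransGen.trans⟩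
  have : Std.Irrefl r := ⟨fun q hq => by
    obtain ⟨γ, hγ, h⟩ := exists_runs_of_transGen (Relation.transGen_swap.1 hq)
    exact hP.acyclic q γ hγ h⟩
  exact Subrelation.wf (fun h => .single h) (Finite.wellFounded_of_trans_of_irrefl r)

section ReachablePart

variable {P : FSM Q I O} {q₀ : Q} {γ : List (I × O)}

def reachablePart (P : FSM Q I O) (q₀ : Q) : FSM {q // ∃ γ, P.Runs q₀ γ q} I O :=
  ⟨fun q i o q' => P.h q i o q'⟩

theorem exists_runs_of_h {q q' : Q} {i : I} {o : O} (hq : ∃ γ, P.Runs q₀ γ q)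
    (h : P.h q i o q') : ∃ γ, P.Runs q₀ γ q' :=
  let ⟨γ, hγ⟩ := hq
  ⟨γ ++ [(i, o)], hγ.snoc h⟩

theorem Runs.of_reachablePart {a b : {q // ∃ γ, P.Runs q₀ γ q}}
    (h : (P.reachablePart q₀).Runs a γ b) : P.Runs a γ b := by
  induction h with
  | nil => exact .nil _
  | cons h₁ _ ih => exact .cons h₁ ih

theorem Runs.reachablePart {a b : Q} (h : P.Runs a γ b) (ha : ∃ δ, P.Runs q₀ δ a) :
    ∃ hb, (P.reachablePart q₀).Runs ⟨a, ha⟩ γ ⟨b, hb⟩ := by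
  induction h with
  | nil => exact ⟨ha, .nil _⟩
  | cons h₁ _ ih =>
    obtain ⟨hb, hr⟩ := ih (exists_runs_of_h ha h₁)
    have h₁' : (P.reachablePart q₀).h ⟨_, ha⟩ _ _ ⟨_, exists_runs_of_h ha h₁⟩ := h₁
    exact ⟨hb, .cons h₁' hr⟩

theorem isTestCase_reachablePart
    (hsingle : ∀ q i₁ o₁ q₁ i₂ o₂ q₂, P.h q i₁ o₁ q₁ → P.h q i₂ o₂ q₂ → i₁ = i₂)
    (hcomplete : ∀ q i o q', P.h q i o q' → ∀ o', ∃ q'', P.h q i o' q'')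
    (hobs : P.Observable) (hacyc : ∀ q γ, γ ≠ [] → ¬ P.Runs q γ q) :
    (P.reachablePart q₀).IsTestCase ⟨q₀, [], .nil q₀⟩ where
  singleInput q _ _ _ _ _ _ := hsingle q _ _ _ _ _ _
  outputComplete q i o q' h o' :=
    let ⟨q'', h''⟩ := hcomplete q i o q' h o'
    ⟨⟨q'', exists_runs_of_h q.2 h''⟩, h''⟩
  observable _ _ _ _ _ h₁ h₂ := Subtype.ext (hobs _ _ _ _ _ h₁ h₂)
  acyclic q γ hγ h := hacyc q γ hγ h.of_reachablePart
  connected q :=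
    let ⟨γ, hγ⟩ := q.2
    ⟨γ, (hγ.reachablePart ⟨[], .nil q₀⟩).2⟩

theorem IsHomingFor.reachablePart {M : FSM S I O} {S' : Set S} (h : M.IsHomingFor S' P q₀) :
    M.IsHomingFor S' (P.reachablePart q₀) ⟨q₀, [], .nil q₀⟩ :=
  fun γ q hq hd =>
    h γ q hq.of_reachablePart fun i o q' h' => hd i o ⟨q', exists_runs_of_h q.2 h'⟩ h'

theorem card_transitions_reachablePart_le [Finite P.Transitions] :
    Nat.card (P.reachablePart q₀).Transitions ≤ Nat.card P.Transitions :=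
  Nat.card_le_card_of_injective (fun t => ⟨(t.1.1, t.1.2.1, t.1.2.2.1, t.1.2.2.2), t.2⟩)
    fun ⟨⟨⟨_, _⟩, _, _, ⟨_, _⟩⟩, _⟩ ⟨⟨⟨_, _⟩, _, _, ⟨_, _⟩⟩, _⟩ h => by
      simp only at h
      obtain ⟨rfl, rfl, rfl, rfl⟩ := h
      rfl

end ReachablePart

section Strategy

variable {inp : X → I} {next : X → O → Option X}

def ofStrategy (inp : X → I) (next : X → O → Option X) : FSM (Option X) I O :=
  ⟨fun q i o q' => ∃ x, q = some x ∧ i = inp x ∧ q' = next x o⟩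

theorem ofStrategy_not_deadlock_some (x : X) (o : O) :
    ¬ (ofStrategy inp next).Deadlock (some x) :=
  fun h => h (inp x) o (next x o) ⟨x, rfl, rfl, rfl⟩

theorem isTestCase_reachablePart_ofStrategy (r : X → ℕ)
    (hr : ∀ x o y, next x o = some y → r y < r x) (q₀ : Option X) :
    ((ofStrategy inp next).reachablePart q₀).IsTestCase ⟨q₀, [], .nil q₀⟩ := by
  refine isTestCase_reachablePart ?_ ?_ ?_
    fun _ _ => not_runs_self_of_rank (fun q : Option X => q.elim 0 (r · + 1)) ?_
  · rintro _ _ _ _ _ _ _ ⟨x, rfl, rfl, -⟩ ⟨y, hy, rfl, -⟩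
    cases hy; rfl
  · rintro _ _ _ _ ⟨x, rfl, rfl, -⟩ o'
    exact ⟨_, x, rfl, rfl, rfl⟩
  · rintro _ _ _ _ _ ⟨x, rfl, -, rfl⟩ ⟨y, hy, -, rfl⟩
    cases hy; rfl
  · rintro _ _ o _ ⟨x, rfl, -, rfl⟩
    cases h : next x o with
    | none => simp
    | some y => simpa using hr x o y h

def ofStrategyTransition (inp : X → I) (next : X → O → Option X) (p : X × O) :
    (ofStrategy inp next).Transitions :=
  ⟨(some p.1, inp p.1, p.2, next p.1 p.2), p.1, rfl, rfl, rfl⟩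

theorem ofStrategyTransition_surjective :
    Function.Surjective (ofStrategyTransition inp next) := by
  rintro ⟨⟨_, _, o, _⟩, x, h₁, h₂, h₃⟩
  dsimp only at h₁ h₂ h₃
  subst h₁ h₂ h₃
  exact ⟨(x, o), rfl⟩

instance [Finite X] [Finite O] : Finite (ofStrategy inp next).Transitions :=
  .of_surjective _ ofStrategyTransition_surjective

theorem card_transitions_ofStrategy_le [Finite X] [Finite O] :
    Nat.card (ofStrategy inp next).Transitions ≤ Nat.card X * Nat.card O :=
  Nat.card_prod X O ▸ Nat.card_le_card_of_surjective _ ofStrategyTransition_surjective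

end Strategy

section Attractor

def attractor (N : FSM X I O) (T : Set X) : ℕ → Set X
  | 0 => T
  | k + 1 => T ∪ {x | ∃ i, ∀ o y, N.h x i o y → y ∈ attractor N T k}

def attractorSet (N : FSM X I O) (T : Set X) : Set X := ⋃ k, N.attractor T k

noncomputable def attractorRank (N : FSM X I O) (T : Set X) (x : X) : ℕ :=
  sInf {k | x ∈ N.attractor T k}

variable {N : FSM X I O} {T : Set X}

theorem attractor_mono : Monotone (N.attractor T) := by
  refine monotone_nat_of_le_succ fun k => ?_
  induction k with
  | zero => exact Set.subset_union_left
  | succ k ih =>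
    exact Set.union_subset_union_right _ fun x ⟨i, hi⟩ => ⟨i, fun o y h => ih (hi o y h)⟩

theorem inputClosed_compl_attractorSet [Finite X] [Finite O] :
    N.InputClosed (N.attractorSet T)ᶜ := by
  intro x hx i
  by_contra! h
  have : ∀ p : {p : O × X // N.h x i p.1 p.2}, ∃ k, p.1.2 ∈ N.attractor T k := fun p =>
    Set.mem_iUnion.1 (by simpa using h _ _ p.2 : p.1.2 ∈ N.attractorSet T)
  choose k hk using this
  obtain ⟨K, hK⟩ := (Set.finite_range k).bddAbove
  exact hx (Set.mem_iUnion.2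
    ⟨K + 1, Or.inr ⟨i, fun o y hy => attractor_mono (hK ⟨⟨(o, y), hy⟩, rfl⟩) (hk ⟨(o, y), hy⟩)⟩⟩)

theorem exists_input_attractorRank_lt {x : X} (hx : x ∈ N.attractorSet T \ T) :
    ∃ i, ∀ o y, N.h x i o y → y ∈ N.attractorSet T ∧ N.attractorRank T y < N.attractorRank T x := by
  have hmem : x ∈ N.attractor T (N.attractorRank T x) := Nat.sInf_mem (Set.mem_iUnion.1 hx.1)
  rcases hr : N.attractorRank T x with _ | k <;> rw [hr] at hmem
  · exact absurd hmem hx.2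
  · obtain hxT | ⟨i, hi⟩ := hmem
    · exact absurd hxT hx.2
    · exact ⟨i, fun o y hy => ⟨Set.mem_iUnion.2 ⟨k, hi o y hy⟩,
        Nat.lt_succ_of_le (Nat.sInf_le (hi o y hy))⟩⟩

variable (N T) in
noncomputable def attractorInput (x : ↥(N.attractorSet T \ T)) : I :=
  (exists_input_attractorRank_lt x.2).choose

variable (N T) in
open Classical in
noncomputable def attractorEnter (y : X) : Option ↥(N.attractorSet T \ T) :=
  if h : y ∈ N.attractorSet T \ T then some ⟨y, h⟩ else none

variable (N T) in
open Classical in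
noncomputable def attractorNext (x : ↥(N.attractorSet T \ T)) (o : O) :
    Option ↥(N.attractorSet T \ T) :=
  if h : ∃ y, N.h x (N.attractorInput T x) o y then N.attractorEnter T h.choose else none

variable (N T) in
noncomputable abbrev attractorStrategy : FSM (Option ↥(N.attractorSet T \ T)) I O :=
  ofStrategy (N.attractorInput T) (N.attractorNext T)

theorem attractorInput_spec (x : ↥(N.attractorSet T \ T)) {o : O} {y : X}
    (h : N.h x (N.attractorInput T x) o y) :
    y ∈ N.attractorSet T ∧ N.attractorRank T y < N.attractorRank T x :=
  (exists_input_attractorRank_lt x.2).choose_spec o y h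

theorem val_eq_of_attractorEnter_eq_some {y : X} {x : ↥(N.attractorSet T \ T)}
    (h : N.attractorEnter T y = some x) : x.1 = y := by
  unfold attractorEnter at h
  split_ifs at h
  cases h
  rfl

theorem attractorNext_eq (hN : N.Observable) {x : ↥(N.attractorSet T \ T)} {o : O} {y : X}
    (h : N.h x (N.attractorInput T x) o y) : N.attractorNext T x o = N.attractorEnter T y := by
  have hy : ∃ y, N.h x (N.attractorInput T x) o y := ⟨y, h⟩
  rw [attractorNext, dif_pos hy, hN _ _ _ _ _ hy.choose_spec h]

theorem attractorRank_lt_of_attractorNext_eq_some {x x' : ↥(N.attractorSet T \ T)} {o : O}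
    (h : N.attractorNext T x o = some x') : N.attractorRank T x' < N.attractorRank T x := by
  unfold attractorNext at h
  split_ifs at h with hy
  rw [val_eq_of_attractorEnter_eq_some h]
  exact (attractorInput_spec x hy.choose_spec).2

theorem attractorStrategy_runs (hN : N.Observable) {x y : X} {γ : List (I × O)}
    {q : Option ↥(N.attractorSet T \ T)} (hx : x ∈ N.attractorSet T)
    (hq : (N.attractorStrategy T).Runs (N.attractorEnter T x) γ q) (hy : N.Runs x γ y) :
    q = N.attractorEnter T y ∧ y ∈ N.attractorSet T := by
  induction hy with
  | nil => exact ⟨runs_nil_iff.1 hq, hx⟩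
  | cons h₁ _ ih =>
    obtain ⟨_, ⟨w, hw, rfl, rfl⟩, hq'⟩ := runs_cons_iff.1 hq
    obtain rfl := val_eq_of_attractorEnter_eq_some hw
    rw [attractorNext_eq hN h₁] at hq'
    exact ih (attractorInput_spec w h₁).1 hq'

theorem mem_of_attractorStrategy_runs_none (hN : N.Observable) {x y : X} {γ : List (I × O)}
    (hx : x ∈ N.attractorSet T)
    (hq : (N.attractorStrategy T).Runs (N.attractorEnter T x) γ none) (hy : N.Runs x γ y) :
    y ∈ T := by
  obtain ⟨hnone, hyA⟩ := attractorStrategy_runs hN hx hq hy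
  by_contra hyT
  rw [attractorEnter, dif_pos ⟨hyA, hyT⟩] at hnone
  cases hnone

end Attractor

section Pairs

variable {M : FSM S I O} {s₁ s₂ : S}

/-- Unlike `inter`, this keeps merged pairs, as the diagonal of `Sym2 S`. -/
def pairs (M : FSM S I O) : FSM (Sym2 S) I O :=
  ⟨fun z i o z' => ∃ a b a' b', z = s(a, b) ∧ z' = s(a', b') ∧ M.h a i o a' ∧ M.h b i o b'⟩

theorem pairs_observable (ho : M.Observable) : M.pairs.Observable := by
  rintro _ i o _ _ ⟨a, b, a', b', rfl, rfl, ha, hb⟩ ⟨c, d, c', d', hz, rfl, hc, hd⟩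
  obtain ⟨rfl, rfl⟩ | ⟨rfl, rfl⟩ := Sym2.eq_iff.1 hz
  · rw [ho _ _ _ _ _ ha hc, ho _ _ _ _ _ hb hd]
  · rw [ho _ _ _ _ _ ha hd, ho _ _ _ _ _ hb hc, Sym2.eq_swap]

theorem runs_pairs_mk_iff {a b : S} {γ : List (I × O)} {z : Sym2 S} :
    M.pairs.Runs s(a, b) γ z ↔ ∃ a' b', M.Runs a γ a' ∧ M.Runs b γ b' ∧ z = s(a', b') := by
  induction γ generalizing a b with
  | nil => simp [runs_nil_iff, eq_comm]
  | cons p γ ih =>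
    obtain ⟨i, o⟩ := p
    simp only [runs_cons_iff]
    constructor
    · rintro ⟨_, ⟨c, d, c', d', hz, rfl, hc, hd⟩, hr⟩
      obtain ⟨a', b', ha', hb', rfl⟩ := ih.1 hr
      obtain ⟨rfl, rfl⟩ | ⟨rfl, rfl⟩ := Sym2.eq_iff.1 hz
      · exact ⟨a', b', ⟨c', hc, ha'⟩, ⟨d', hd, hb'⟩, rfl⟩
      · exact ⟨b', a', ⟨d', hd, hb'⟩, ⟨c', hc, ha'⟩, Sym2.eq_swap⟩
    · rintro ⟨a', b', ⟨a₁, ha, ha'⟩, ⟨b₁, hb, hb'⟩, rfl⟩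
      exact ⟨s(a₁, b₁), ⟨a, b, a₁, b₁, rfl, rfl, ha, hb⟩, ih.2 ⟨a', b', ha', hb', rfl⟩⟩

/-- Whatever input the test case applies, some output keeps the pair inside `B`, so no trace
ending in a deadlock merges it. -/
theorem notMem_of_inputClosed_pairs [Finite Q] {P : FSM Q I O} {q₀ : Q}
    (hP : P.IsTestCase q₀) (hhom : M.IsHomingFor {s₁, s₂} P q₀) {B : Set (Sym2 S)}
    (hB : M.pairs.InputClosed B)
    (hBd : ∀ z ∈ B, ¬ z.IsDiag) : s(s₁, s₂) ∉ B := by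
  suffices ∀ q γ z, P.Runs q₀ γ q → M.pairs.Runs s(s₁, s₂) γ z → z ∉ B from
    this q₀ [] _ (.nil _) (.nil _)
  intro q
  induction q using hP.wellFounded.induction with
  | _ q ih =>
  intro γ z hq hz hzB
  by_cases hd : P.Deadlock q
  · obtain ⟨t₁, t₂, ht₁, ht₂, rfl⟩ := runs_pairs_mk_iff.1 hz
    obtain ⟨s, hs⟩ := hhom γ q hq hd
    exact hBd _ hzB (Sym2.mk_isDiag_iff.2
      ((hs s₁ (by simp) t₁ ht₁).trans (hs s₂ (by simp) t₂ ht₂).symm))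
  · simp only [Deadlock, not_forall, not_not] at hd
    obtain ⟨i, o₁, q₁, hq₁⟩ := hd
    obtain ⟨o, z', hzz', hz'B⟩ := hB z hzB i
    obtain ⟨q', hqq'⟩ := hP.outputComplete q i o₁ q₁ hq₁ o
    exact ih q' ⟨i, o, hqq'⟩ (γ ++ [(i, o)]) z' (hq.snoc hqq') (hz.snoc hzz') hz'B

theorem mem_attractorSet_of_adaptivelyHomingPair [Finite S] [Finite O]
    (hp : M.AdaptivelyHomingPair s₁ s₂) : s(s₁, s₂) ∈ M.pairs.attractorSet Sym2.diagSet := by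
  obtain ⟨Q, _, P, q₀, hP, hhom⟩ := hp
  by_contra h
  exact notMem_of_inputClosed_pairs hP hhom inputClosed_compl_attractorSet
    (fun z hz hd => hz (Set.mem_iUnion.2 ⟨0, hd⟩)) h

theorem isHomingFor_attractorStrategy_pairs (hc : M.Complete) (ho : M.Observable)
    (h₀ : s(s₁, s₂) ∈ M.pairs.attractorSet Sym2.diagSet) :
    M.IsHomingFor {s₁, s₂} (M.pairs.attractorStrategy Sym2.diagSet)
      (M.pairs.attractorEnter Sym2.diagSet s(s₁, s₂)) := by
  intro γ q hq hd
  obtain rfl : q = none := by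
    obtain _ | x := q
    · rfl
    · obtain ⟨o, -⟩ := hc s₁ (M.pairs.attractorInput _ x)
      exact absurd hd (ofStrategy_not_deadlock_some x o)
  refine exists_forall_runs_eq ho fun t₁ t₂ ht₁ ht₂ => Sym2.mk_isDiag_iff.1 ?_
  exact mem_of_attractorStrategy_runs_none (pairs_observable ho) h₀ hq
    (runs_pairs_mk_iff.2 ⟨t₁, t₂, ht₁, ht₂, rfl⟩)

theorem card_diff_diagSet_le [Finite S] (A : Set (Sym2 S)) :
    Nat.card ↥(A \ Sym2.diagSet) ≤ (Nat.card S).choose 2 := by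
  rw [← Sym2.ncard_diagSet_compl, Nat.card_coe_set_eq]
  exact Set.ncard_le_ncard fun _ hz => hz.2

end Pairs

end FSM

theorem adaptively_homing_pair_small_test_case_general
    {S I O : Type} [Fintype S] [Fintype O]
    (M : FSM S I O) (hc : M.Complete) (ho : M.Observable) (s₁ s₂ : S)
    (hp : M.AdaptivelyHomingPair s₁ s₂) :
    ∃ (Q : Type) (_ : Fintype Q) (P : FSM Q I O) (q0 : Q),
      P.IsTestCase q0 ∧ FSM.IsHomingFor M {s₁, s₂} P q0 ∧
      Nat.card Q ≤ Fintype.card S * (Fintype.card S - 1) / 2 + 1 ∧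
      Nat.card {t : Q × I × O × Q // P.h t.1 t.2.1 t.2.2.1 t.2.2.2} ≤
        (Fintype.card S * (Fintype.card S - 1) / 2) * Fintype.card O := by
  let W := ↥(M.pairs.attractorSet Sym2.diagSet \ Sym2.diagSet)
  have hW : Nat.card W ≤ Fintype.card S * (Fintype.card S - 1) / 2 := by
    rw [← Nat.choose_two_right, ← Nat.card_eq_fintype_card]
    exact FSM.card_diff_diagSet_le _
  let P := M.pairs.attractorStrategy Sym2.diagSet
  let q₀ := M.pairs.attractorEnter Sym2.diagSet s(s₁, s₂)
  have hP : (P.reachablePart q₀).IsTestCase ⟨q₀, [], .nil q₀⟩ :=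
    FSM.isTestCase_reachablePart_ofStrategy _
      (fun _ _ _ => FSM.attractorRank_lt_of_attractorNext_eq_some) q₀
  have hhom := FSM.isHomingFor_attractorStrategy_pairs hc ho
    (FSM.mem_attractorSet_of_adaptivelyHomingPair hp)
  refine ⟨_, Fintype.ofFinite _, P.reachablePart q₀, _, hP, hhom.reachablePart, ?_, ?_⟩
  · calc _ ≤ Nat.card (Option W) := Finite.card_subtype_le _
      _ = Nat.card W + 1 := Finite.card_option
      _ ≤ _ := by omega
  · calc _ ≤ Nat.card P.Transitions := FSM.card_transitions_reachablePart_le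
      _ ≤ Nat.card W * Nat.card O := FSM.card_transitions_ofStrategy_le
      _ ≤ _ := by rw [Nat.card_eq_fintype_card (α := O)]; exact Nat.mul_le_mul_right _ hW

/-- if `(s₁, s₂)` is adaptively homing in a complete observable FSM with `n`
states, there is a homing test case for `{s₁, s₂}` with at most `n(n-1)/2 + 1` states and at
most `(n(n-1)/2) · |O|` transitions. -/
theorem adaptively_homing_pair_small_test_case
    {S I O : Type} [Fintype S] [Fintype I] [Fintype O]
    (M : FSM S I O) (hc : M.Complete) (ho : M.Observable) (s₁ s₂ : S)
    (hp : M.AdaptivelyHomingPair s₁ s₂) :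
    ∃ (Q : Type) (_ : Fintype Q) (P : FSM Q I O) (q0 : Q),
      P.IsTestCase q0 ∧ FSM.IsHomingFor M {s₁, s₂} P q0 ∧
      Nat.card Q ≤ Fintype.card S * (Fintype.card S - 1) / 2 + 1 ∧
      Nat.card {t : Q × I × O × Q // P.h t.1 t.2.1 t.2.2.1 t.2.2.2} ≤
        (Fintype.card S * (Fintype.card S - 1) / 2) * Fintype.card O :=
  adaptively_homing_pair_small_test_case_general M hc ho s₁ s₂ hp
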